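/- arXiv:2007.05844 — 3 statements merged into one kernel-verified Lean document; each statement's English description precedes it below -/
import Mathlib

section
/- Assuming the Continuum Hypothesis, there exists a Luzin mad family 𝒜 such that for every infinite X ⊆ ℕ, either X is covered by finitely many elements of 𝒜 (i.e., X ⊆ ⋃F for some finite F ⊆ 𝒜) or the set {a ∈ 𝒜 : a ∩ X is finite} is countable. -/
open Set

namespace PsiSpace

/-- An (infinite) almost disjoint family of infinite subsets of ℕ. -/
def AlmostDisjoint (𝒜 : Set (Set ℕ)) : Prop :=
  𝒜.Infinite ∧ (∀ a ∈ 𝒜, a.Infinite) ∧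
    ∀ a ∈ 𝒜, ∀ b ∈ 𝒜, a ≠ b → (a ∩ b).Finite

/-- A maximal almost disjoint family. -/
def MadFamily (𝒜 : Set (Set ℕ)) : Prop :=
  AlmostDisjoint 𝒜 ∧ ∀ X : Set ℕ, X.Infinite → ∃ a ∈ 𝒜, (a ∩ X).Infinite

/-- 𝒜↾B = {a ∈ 𝒜 : a ∩ B infinite}. -/
def ADRestrict (𝒜 : Set (Set ℕ)) (B : Set ℕ) : Set (Set ℕ) :=
  {a | a ∈ 𝒜 ∧ (a ∩ B).Infinite}

/-- 𝒜 has true cardinality 𝔠. -/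
def TrueCardContinuum (𝒜 : Set (Set ℕ)) : Prop :=
  ∀ B : Set ℕ, (ADRestrict 𝒜 B).Finite ∨ Cardinal.mk ↥(ADRestrict 𝒜 B) = Cardinal.continuum

/-- The underlying set of the Mrówka–Isbell space Ψ(𝒜): ℕ together with the members of 𝒜. -/
def Psi (𝒜 : Set (Set ℕ)) : Type := ℕ ⊕ {a : Set ℕ // a ∈ 𝒜}

/-- The isolated point of Ψ(𝒜) corresponding to n ∈ ℕ. -/
def Psi.nat {𝒜 : Set (Set ℕ)} (n : ℕ) : Psi 𝒜 := Sum.inl n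

/-- The point of Ψ(𝒜) corresponding to a ∈ 𝒜. -/
def Psi.pt {𝒜 : Set (Set ℕ)} (a : {a : Set ℕ // a ∈ 𝒜}) : Psi 𝒜 := Sum.inr a

/-- The Mrówka–Isbell topology: each n ∈ ℕ is isolated, and basic neighbourhoods of a ∈ 𝒜
are {a} ∪ (a \ F) for F finite. Equivalently, U is open iff for every a ∈ 𝒜 with a ∈ U,
all but finitely many elements of a belong to U. -/
instance psiTop (𝒜 : Set (Set ℕ)) : TopologicalSpace (Psi 𝒜) where
  IsOpen U := ∀ a : {a : Set ℕ // a ∈ 𝒜}, Psi.pt a ∈ U →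
    {n : ℕ | n ∈ a.1 ∧ Psi.nat n ∉ U}.Finite
  isOpen_univ := fun a _ => by
    convert Set.finite_empty using 1
    ext n
    simp [Set.mem_univ]
  isOpen_inter := fun U V hU hV a ha => by
    refine ((hU a ha.1).union (hV a ha.2)).subset ?_
    rintro n ⟨hn, hnUV⟩
    by_cases h : Psi.nat n ∈ U
    · exact Or.inr ⟨hn, fun h' => hnUV ⟨h, h'⟩⟩
    · exact Or.inl ⟨hn, h⟩
  isOpen_sUnion := fun S hS a ha => by
    obtain ⟨U, hUS, haU⟩ := ha
    exact (hS U hUS a haU).subset fun n hn => ⟨hn.1, fun h => hn.2 ⟨U, hUS, h⟩⟩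

/-- The copy of a set W ⊆ ℕ inside Ψ(𝒜). -/
def PsiNat (𝒜 : Set (Set ℕ)) (W : Set ℕ) : Set (Psi 𝒜) := {x | ∃ n ∈ W, x = Psi.nat n}

/-- The copy of a subfamily 𝒞 ⊆ 𝒜 inside Ψ(𝒜). -/
def PsiSub (𝒜 𝒞 : Set (Set ℕ)) : Set (Psi 𝒜) :=
  {x | ∃ a : {a : Set ℕ // a ∈ 𝒜}, a.1 ∈ 𝒞 ∧ x = Psi.pt a}

/-- A and B are separated by disjoint open sets. -/
def SepOpen {X : Type*} [TopologicalSpace X] (A B : Set X) : Prop :=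
  ∃ U V : Set X, IsOpen U ∧ IsOpen V ∧ A ⊆ U ∧ B ⊆ V ∧ Disjoint U V

/-- Regular closed (closed domain): A is the closure of its interior. -/
def RegClosed {X : Type*} [TopologicalSpace X] (A : Set X) : Prop :=
  closure (interior A) = A

/-- π-closed: a finite intersection of regular closed sets. -/
def PiClosed {X : Type*} [TopologicalSpace X] (A : Set X) : Prop :=
  ∃ S : Finset (Set X), (∀ B ∈ S, RegClosed B) ∧ A = ⋂₀ ↑S

/-- A is an intersection of at most n regular closed sets. -/
def InterOfAtMost {X : Type*} [TopologicalSpace X] (n : ℕ) (A : Set X) : Prop :=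
  ∃ S : Finset (Set X), S.card ≤ n ∧ (∀ B ∈ S, RegClosed B) ∧ A = ⋂₀ ↑S

/-- Almost-normal: disjoint closed + regular closed sets are separated. -/
def AlmostNormal (X : Type*) [TopologicalSpace X] : Prop :=
  ∀ A B : Set X, IsClosed A → RegClosed B → Disjoint A B → SepOpen A B

/-- π-normal: disjoint closed + π-closed sets are separated. -/
def PiNormal (X : Type*) [TopologicalSpace X] : Prop :=
  ∀ A B : Set X, IsClosed A → PiClosed B → Disjoint A B → SepOpen A B

/-- Quasi-normal: disjoint π-closed sets are separated. -/
def QuasiNormal (X : Type*) [TopologicalSpace X] : Prop :=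
  ∀ A B : Set X, PiClosed A → PiClosed B → Disjoint A B → SepOpen A B

/-- Mildly-normal: disjoint regular closed sets are separated. -/
def MildlyNormal (X : Type*) [TopologicalSpace X] : Prop :=
  ∀ A B : Set X, RegClosed A → RegClosed B → Disjoint A B → SepOpen A B

/-- Partly-normal: disjoint regular closed + π-closed sets are separated. -/
def PartlyNormal (X : Type*) [TopologicalSpace X] : Prop :=
  ∀ A B : Set X, RegClosed A → PiClosed B → Disjoint A B → SepOpen A B

/-- n-partly-normal: disjoint regular closed + (intersection of at most n regular closed)
sets are separated. -/
def NPartlyNormal (n : ℕ) (X : Type*) [TopologicalSpace X] : Prop :=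
  ∀ A B : Set X, RegClosed A → InterOfAtMost n B → Disjoint A B → SepOpen A B

/-- 𝓘⁺(𝒜): the sets B ⊆ ℕ with 𝒜↾B infinite. -/
def IPlus (𝒜 : Set (Set ℕ)) : Set (Set ℕ) := {B | (ADRestrict 𝒜 B).Infinite}

/-- Completely separable almost disjoint family. -/
def CompletelySeparable (𝒜 : Set (Set ℕ)) : Prop :=
  ∀ B ∈ IPlus 𝒜, ∃ a ∈ 𝒜, a ⊆ B

/-- A Luzin family: it can be enumerated as ⟨a_α : α < ω₁⟩ so that for each α < ω₁ and
n ∈ ℕ, the set {β < α : a_α ∩ a_β ⊆ n} is finite. -/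
def LuzinFamily (𝒜 : Set (Set ℕ)) : Prop :=
  ∃ a : Ordinal.{0} → Set ℕ,
    (∀ α, α < (Cardinal.aleph 1).ord → a α ∈ 𝒜) ∧
    (∀ x ∈ 𝒜, ∃ α, α < (Cardinal.aleph 1).ord ∧ a α = x) ∧
    (∀ α, α < (Cardinal.aleph 1).ord → ∀ β, β < (Cardinal.aleph 1).ord → α ≠ β → a α ≠ a β) ∧
    ∀ α, α < (Cardinal.aleph 1).ord → ∀ n : ℕ,
      {β : Ordinal.{0} | β < α ∧ a α ∩ a β ⊆ Set.Iio n}.Finite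

/-- Strongly ℵ₀-separated almost disjoint family. -/
def StronglyAleph0Separated (𝒜 : Set (Set ℕ)) : Prop :=
  ∀ A B : Set (Set ℕ), A ⊆ 𝒜 → B ⊆ 𝒜 → A.Countable → A.Infinite →
    B.Countable → B.Infinite → Disjoint A B →
    ∃ X : Set ℕ,
      (∀ a ∈ 𝒜, (a \ X).Finite ∨ (a ∩ X).Finite) ∧
      (∀ a ∈ A, (a \ X).Finite) ∧
      (∀ a ∈ B, (a ∩ X).Finite)

/-!
Under CH list all subsets of `ℕ` as `X γ`, `γ < ω₁`, and build `a α` by recursion on `α < ω₁`.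
The first `ω` sets partition `ℕ` into infinite pieces. At an infinite stage the earlier sets form
a countable almost disjoint family `b 0, b 1, …`, and a diagonal construction yields an infinite
`a α` almost disjoint from all of them which meets each `b k` at some point `≥ k` (so that only
finitely many `b k` meet `a α` below `n`: the Luzin condition) and meets infinitely every `X γ`,
`γ ≤ α`, that is not covered mod finite by finitely many earlier sets.

If `X` is covered mod finite by finitely many members of the final family, finitely many pieces
cover the rest. Otherwise `X = X γ` meets every `a α` with `α ≥ max γ ω` infinitely, so only
countably many members are almost disjoint from it. Either way some member meets `X` infinitely,
which gives maximality.
-/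

/-- `S` lies in the ideal generated by `F` and the finite sets. -/
def AlmostCovered (F : Set (Set ℕ)) (S : Set ℕ) : Prop :=
  ∃ G : Finset (Set ℕ), ↑G ⊆ F ∧ (S \ ⋃₀ ↑G).Finite

theorem AlmostCovered.mono {F F' : Set (Set ℕ)} {S : Set ℕ} (h : F ⊆ F') (hS : AlmostCovered F S) :
    AlmostCovered F' S :=
  let ⟨G, hGF, hG⟩ := hS
  ⟨G, hGF.trans h, hG⟩

theorem infinite_diff_sUnion {α : Type*} {s : Set α} {G : Set (Set α)} (hG : G.Finite)
    (hs : s.Infinite) (hsG : ∀ g ∈ G, (s ∩ g).Finite) : (s \ ⋃₀ G).Infinite := by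
  intro hfin
  refine hs ((hfin.union (hG.biUnion hsG)).subset fun x hx => ?_)
  by_cases hxG : x ∈ ⋃₀ G
  · obtain ⟨g, hg, hxg⟩ := hxG
    exact Or.inr (mem_biUnion hg ⟨hx, hxg⟩)
  · exact Or.inl ⟨hx, hxG⟩

theorem exists_inter_infinite_of_subset_sUnion {α : Type*} {s : Set α} {G : Set (Set α)}
    (hG : G.Finite) (hs : s.Infinite) (hsG : s ⊆ ⋃₀ G) : ∃ g ∈ G, (s ∩ g).Infinite := by
  by_contra! h
  exact infinite_diff_sUnion hG hs h (by simp [sdiff_eq_empty.mpr hsG])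

theorem AlmostDisjoint.not_almostCovered_univ {F : Set (Set ℕ)} (hF : AlmostDisjoint F) :
    ¬AlmostCovered F univ := by
  rintro ⟨G, hGF, hG⟩
  obtain ⟨f, hfF, hfG⟩ := (hF.1.sdiff G.finite_toSet).nonempty
  refine infinite_diff_sUnion G.finite_toSet (hF.2.1 f hfF) (fun g hg => ?_)
    (hG.subset (sdiff_subset_sdiff_left (subset_univ f)))
  exact hF.2.2 f hfF g (hGF hg) (ne_of_mem_of_not_mem hg hfG).symm

theorem AlmostCovered.exists_finset {F : Set (Set ℕ)} (hF : ⋃₀ F = univ) {S : Set ℕ}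
    (hS : AlmostCovered F S) : ∃ G : Finset (Set ℕ), ↑G ⊆ F ∧ S ⊆ ⋃₀ ↑G := by
  classical
  obtain ⟨G, hGF, hG⟩ := hS
  choose f hfF hf using fun n => (hF ▸ mem_univ n : n ∈ ⋃₀ F)
  refine ⟨G ∪ hG.toFinset.image f, ?_, fun n hn => ?_⟩
  · simp only [Finset.coe_union, Finset.coe_image, union_subset_iff, image_subset_iff]
    exact ⟨hGF, fun n _ => hfF n⟩
  · by_cases hnG : n ∈ ⋃₀ (G : Set (Set ℕ))
    · exact sUnion_mono (by simp) hnG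
    · refine ⟨f n, Finset.mem_union_right _ (Finset.mem_image_of_mem f ?_), hf n⟩
      simpa using And.intro hn hnG

theorem exists_strictMono_forall_mem {T : ℕ → Set ℕ} (hT : ∀ m, (T m).Infinite) :
    ∃ g : ℕ → ℕ, StrictMono g ∧ ∀ m, g m ∈ T m := by
  choose next hnext hlt using fun m t => (hT m).exists_gt t
  let g : ℕ → ℕ := fun m => Nat.rec (next 0 0) (fun m gm => next (m + 1) gm) m
  refine ⟨g, strictMono_nat_of_lt_succ fun m => hlt _ _, fun m => ?_⟩
  cases m <;> exact hnext _ _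

theorem exists_luzin_extension_of_seq {b Y : ℕ → Set ℕ} (hb : ∀ k, (b k).Infinite)
    (hbb : Pairwise fun k j => (b k ∩ b j).Finite) (hY : ∀ i, ¬AlmostCovered (range b) (Y i)) :
    ∃ c : Set ℕ, (∀ k, (c ∩ b k).Finite) ∧ (∀ k, ∃ x ∈ c ∩ b k, k ≤ x) ∧
      ∀ i, (c ∩ Y i).Infinite := by
  -- Even stages meet the `b k` in turn, odd stages meet each `Y i` infinitely often;
  -- stage `m` avoids `b j` for `j < m / 2`, which keeps `c` almost disjoint from every `b j`.
  let R : ℕ → Set ℕ := fun m => if m % 2 = 0 then b (m / 2) else Y (m / 2).unpair.1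
  let T : ℕ → Set ℕ := fun m => R m \ ⋃₀ (b '' Iio (m / 2))
  have hT : ∀ m, (T m).Infinite := by
    intro m
    by_cases hm : m % 2 = 0
    · simp only [T, R, if_pos hm]
      refine infinite_diff_sUnion ((finite_Iio _).image b) (hb _) ?_
      rintro _ ⟨j, hj, rfl⟩
      exact hbb (ne_of_gt hj)
    · simp only [T, R, if_neg hm]
      refine fun hfin => hY (m / 2).unpair.1 ⟨(Finset.range (m / 2)).image b, ?_, ?_⟩
      · simp [image_subset_iff]
      · simpa using hfin
  obtain ⟨g, hg, hgT⟩ := exists_strictMono_forall_mem hT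
  refine ⟨range g, fun k => ?_, fun k => ?_, fun i => ?_⟩
  · refine ((finite_Iio (2 * k + 2)).image g).subset ?_
    rintro _ ⟨⟨m, rfl⟩, hm⟩
    refine ⟨m, ?_, rfl⟩
    by_contra hmk
    exact (hgT m).2 ⟨b k, ⟨k, by simp only [mem_Iio, not_lt] at hmk ⊢; omega, rfl⟩, hm⟩
  · have h2k := (hgT (2 * k)).1
    simp only [R, Nat.mul_mod_right, if_pos, Nat.mul_div_cancel_left _ two_pos] at h2k
    exact ⟨g (2 * k), ⟨mem_range_self _, h2k⟩, (by omega : k ≤ 2 * k).trans (hg.id_le _)⟩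
  · refine infinite_of_injective_forall_mem (f := fun s => g (2 * Nat.pair i s + 1)) ?_ ?_
    · intro s t hst
      have := hg.injective hst
      exact (Nat.pair_eq_pair.mp (by omega : Nat.pair i s = Nat.pair i t)).2
    · intro s
      have hs := (hgT (2 * Nat.pair i s + 1)).1
      have hodd : (2 * Nat.pair i s + 1) % 2 ≠ 0 := by omega
      have hhalf : (2 * Nat.pair i s + 1) / 2 = Nat.pair i s := by omega
      simp only [R, if_neg hodd, hhalf, Nat.unpair_pair] at hs
      exact ⟨mem_range_self _, hs⟩

/-- `c` can be appended to a Luzin enumeration of `F`. -/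
def IsLuzinExtension (F 𝒳 : Set (Set ℕ)) (c : Set ℕ) : Prop :=
  c.Infinite ∧ (∀ f ∈ F, (c ∩ f).Finite) ∧ (∀ n : ℕ, {f ∈ F | c ∩ f ⊆ Iio n}.Finite) ∧
    ∀ S ∈ 𝒳, (c ∩ S).Infinite

theorem AlmostDisjoint.exists_isLuzinExtension {F 𝒳 : Set (Set ℕ)} (hF : AlmostDisjoint F)
    (hFc : F.Countable) (h𝒳 : 𝒳.Countable) (h𝒳F : ∀ S ∈ 𝒳, ¬AlmostCovered F S) :
    ∃ c, IsLuzinExtension F 𝒳 c := by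
  have := hFc.to_subtype
  have := hF.1.to_subtype
  obtain ⟨_⟩ := nonempty_denumerable F
  let e := Denumerable.eqv F
  let b : ℕ → Set ℕ := fun k => e.symm k
  have hbe : ∀ f : F, b (e f) = f := by simp [b]
  have hb : range b = F := by
    refine (range_subset_iff.mpr fun k => (e.symm k).2).antisymm fun f hf => ?_
    exact ⟨e ⟨f, hf⟩, hbe ⟨f, hf⟩⟩
  -- `univ` is added so that the family of targets is nonempty and `c` comes out infinite
  obtain ⟨Y, hY⟩ := (h𝒳.insert univ).exists_eq_range (insert_nonempty _ _)
  have hYF : ∀ i, ¬AlmostCovered (range b) (Y i) := by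
    intro i
    rw [hb]
    rcases (hY ▸ mem_range_self i : Y i ∈ insert univ 𝒳) with hi | hi
    · exact hi ▸ hF.not_almostCovered_univ
    · exact h𝒳F _ hi
  have hbb : Pairwise fun k j => (b k ∩ b j).Finite := fun k j hkj =>
    hF.2.2 _ (e.symm k).2 _ (e.symm j).2 (Subtype.val_injective.ne (e.symm.injective.ne hkj))
  obtain ⟨c, hcb, hchit, hcY⟩ :=
    exists_luzin_extension_of_seq (fun k => hF.2.1 _ (e.symm k).2) hbb hYF
  have hcX : ∀ S ∈ insert univ 𝒳, (c ∩ S).Infinite := by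
    rintro S hS
    obtain ⟨i, rfl⟩ := hY ▸ hS
    exact hcY i
  refine ⟨c, by simpa using hcX univ (mem_insert _ _), fun f hf => ?_, fun n => ?_,
    fun S hS => hcX S (mem_insert_of_mem _ hS)⟩
  · simpa [hbe] using hcb (e ⟨f, hf⟩)
  · refine ((finite_Iio n).image b).subset ?_
    rintro f ⟨hf, hfn⟩
    obtain ⟨x, hx, hkx⟩ := hchit (e ⟨f, hf⟩)
    rw [Equiv.symm_apply_apply] at hx
    exact ⟨e ⟨f, hf⟩, lt_of_le_of_lt hkx (hfn hx), hbe _⟩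

theorem countable_Iio_of_lt_ord_aleph_one {α : Ordinal.{u}} (hα : α < (Cardinal.aleph 1).ord) :
    (Iio α).Countable := by
  rw [← Cardinal.le_aleph0_iff_set_countable, Cardinal.mk_Iio_ordinal, Cardinal.lift_le_aleph0,
    ← Cardinal.lt_aleph_one_iff]
  exact Cardinal.lt_ord.mp hα

theorem omega0_lt_ord_aleph_one : Ordinal.omega0.{u} < (Cardinal.aleph 1).ord :=
  Cardinal.ord_aleph 1 ▸ Ordinal.omega0_lt_omega_one

theorem exists_surj_of_continuum_eq_aleph_one (hCH : Cardinal.continuum.{u} = Cardinal.aleph 1) :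
    ∃ X : Ordinal.{0} → Set ℕ, ∀ S, ∃ γ < (Cardinal.aleph 1).ord, X γ = S := by
  have hCH0 : Cardinal.continuum.{0} = Cardinal.aleph 1 :=
    Cardinal.lift_injective.{u} (by simpa using hCH)
  obtain ⟨f⟩ : Nonempty (Set ℕ ↪ Iio (Cardinal.aleph.{0} 1).ord) := by
    rw [← Cardinal.lift_mk_le'.{0, 1}, Cardinal.mk_Iio_ordinal, Cardinal.card_ord,
      Cardinal.mk_set_nat, hCH0, Cardinal.lift_uzero]
  refine ⟨Function.invFun fun S => (f S : Ordinal), fun S => ⟨f S, (f S).2, ?_⟩⟩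
  exact Function.leftInverse_invFun (Subtype.val_injective.comp f.injective) S

theorem almostDisjoint_image {ι : Type*} [LinearOrder ι] {a : ι → Set ℕ} {s : Set ι}
    (hs : (a '' s).Infinite) (ha : ∀ i ∈ s, (a i).Infinite)
    (had : ∀ i ∈ s, ∀ j ∈ s, j < i → (a i ∩ a j).Finite) : AlmostDisjoint (a '' s) := by
  refine ⟨hs, forall_mem_image.mpr ha, ?_⟩
  rintro _ ⟨i, hi, rfl⟩ _ ⟨j, hj, rfl⟩ hne
  rcases lt_trichotomy i j with hij | rfl | hij
  · exact inter_comm (a i) _ ▸ had j hj i hi hij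
  · exact absurd rfl hne
  · exact had i hi j hj hij

def natPiece (n : ℕ) : Set ℕ := {m | m.unpair.1 = n}

theorem natPiece_infinite (n : ℕ) : (natPiece n).Infinite :=
  infinite_of_injective_forall_mem (fun _ _ h => (Nat.pair_eq_pair.mp h).2)
    fun k => show (Nat.pair n k).unpair.1 = n by simp

theorem natPiece_inter_eq_empty {n m : ℕ} (h : n ≠ m) : natPiece n ∩ natPiece m = ∅ :=
  eq_empty_of_forall_notMem fun _ hx => h (hx.1.symm.trans hx.2)

theorem natPiece_injective : Function.Injective natPiece := fun n m h => by
  by_contra hnm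
  have := natPiece_inter_eq_empty hnm
  rw [h, inter_self] at this
  exact (natPiece_infinite m).nonempty.ne_empty this

section LuzinSeq

open Ordinal

variable (X : Ordinal.{0} → Set ℕ)

def targets (F : Set (Set ℕ)) (α : Ordinal.{0}) : Set (Set ℕ) :=
  {S ∈ X '' Iic α | ¬AlmostCovered F S}

/-- `X` is meant to list all subsets of `ℕ` in order type `ω₁`, which CH makes possible. -/
noncomputable def luzinSeq : Ordinal.{0} → Set ℕ :=
  WellFoundedLT.fix fun α prev =>
    if α < ω then natPiece α.card.toNat
    else
      let F := {s | ∃ β h, prev β h = s}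
      Classical.epsilon (IsLuzinExtension F (targets X F α))

theorem luzinSeq_natCast (n : ℕ) : luzinSeq X n = natPiece n := by
  rw [luzinSeq, WellFoundedLT.fix_eq, if_pos (natCast_lt_omega0 n), card_nat,
    Cardinal.toNat_natCast]

theorem luzinSeq_of_omega0_le {α : Ordinal.{0}} (hα : ω ≤ α) :
    luzinSeq X α = Classical.epsilon
      (IsLuzinExtension (luzinSeq X '' Iio α) (targets X (luzinSeq X '' Iio α) α)) := by
  have hF : {s | ∃ β, ∃ _ : β < α, luzinSeq X β = s} = luzinSeq X '' Iio α := by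
    ext; simp
  rw [luzinSeq, WellFoundedLT.fix_eq, if_neg (not_lt.mpr hα)]
  exact congrArg (fun F => Classical.epsilon (IsLuzinExtension F (targets X F α))) hF

theorem natPiece_mem_image_luzinSeq {α : Ordinal.{0}} (hα : ω ≤ α) (n : ℕ) :
    natPiece n ∈ luzinSeq X '' Iio α :=
  ⟨n, (natCast_lt_omega0 n).trans_le hα, luzinSeq_natCast X n⟩

theorem almostDisjoint_image_luzinSeq {α : Ordinal.{0}} (hα : ω ≤ α)
    (ih : ∀ β < α, (luzinSeq X β).Infinite ∧ ∀ γ < β, (luzinSeq X β ∩ luzinSeq X γ).Finite) :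
    AlmostDisjoint (luzinSeq X '' Iio α) :=
  almostDisjoint_image
    (infinite_of_injective_forall_mem natPiece_injective (natPiece_mem_image_luzinSeq X hα))
    (fun β hβ => (ih β hβ).1) fun β _ γ _ hγβ => (ih β ‹_›).2 γ hγβ

theorem isLuzinExtension_luzinSeq_of_forall_lt {α : Ordinal.{0}} (hω : ω ≤ α)
    (hα : α < (Cardinal.aleph 1).ord)
    (ih : ∀ β < α, (luzinSeq X β).Infinite ∧ ∀ γ < β, (luzinSeq X β ∩ luzinSeq X γ).Finite) :
    IsLuzinExtension (luzinSeq X '' Iio α) (targets X (luzinSeq X '' Iio α) α) (luzinSeq X α) := by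
  have hIic : (Iic α).Countable :=
    Iio_insert (a := α) ▸ (countable_Iio_of_lt_ord_aleph_one hα).insert α
  rw [luzinSeq_of_omega0_le X hω]
  exact Classical.epsilon_spec <| (almostDisjoint_image_luzinSeq X hω ih).exists_isLuzinExtension
    ((countable_Iio_of_lt_ord_aleph_one hα).image _) ((hIic.image X).mono (sep_subset _ _))
    fun _ hS => hS.2

theorem luzinSeq_infinite_and_inter_finite {α : Ordinal.{0}} (hα : α < (Cardinal.aleph 1).ord) :
    (luzinSeq X α).Infinite ∧ ∀ β < α, (luzinSeq X α ∩ luzinSeq X β).Finite := by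
  induction α using WellFoundedLT.induction with
  | _ α ih =>
    rcases lt_or_ge α ω with hω | hω
    · obtain ⟨n, rfl⟩ := lt_omega0.mp hω
      refine ⟨luzinSeq_natCast X n ▸ natPiece_infinite n, fun β hβ => ?_⟩
      obtain ⟨m, rfl⟩ := lt_omega0.mp (hβ.trans hω)
      rw [luzinSeq_natCast, luzinSeq_natCast,
        natPiece_inter_eq_empty (by exact_mod_cast hβ.ne' : n ≠ m)]
      exact finite_empty
    · have h := isLuzinExtension_luzinSeq_of_forall_lt X hω hα fun β hβ => ih β hβ (hβ.trans hα)
      exact ⟨h.1, fun β hβ => h.2.1 _ (mem_image_of_mem _ hβ)⟩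

theorem isLuzinExtension_luzinSeq {α : Ordinal.{0}} (hω : ω ≤ α)
    (hα : α < (Cardinal.aleph 1).ord) :
    IsLuzinExtension (luzinSeq X '' Iio α) (targets X (luzinSeq X '' Iio α) α) (luzinSeq X α) :=
  isLuzinExtension_luzinSeq_of_forall_lt X hω hα fun _ hβ =>
    luzinSeq_infinite_and_inter_finite X (hβ.trans hα)

theorem almostDisjoint_luzinFamily : AlmostDisjoint (luzinSeq X '' Iio (Cardinal.aleph 1).ord) :=
  almostDisjoint_image_luzinSeq X omega0_lt_ord_aleph_one.le fun _ hβ =>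
    luzinSeq_infinite_and_inter_finite X hβ

theorem sUnion_luzinFamily : ⋃₀ (luzinSeq X '' Iio (Cardinal.aleph 1).ord) = Set.univ :=
  eq_univ_of_forall fun m =>
    ⟨_, natPiece_mem_image_luzinSeq X omega0_lt_ord_aleph_one.le m.unpair.1, rfl⟩

theorem injOn_luzinSeq : InjOn (luzinSeq X) (Iio (Cardinal.aleph 1).ord) := by
  intro α hα β hβ hab
  by_contra hne
  wlog hlt : β < α generalizing α β
  · exact this hβ hα hab.symm (Ne.symm hne) (lt_of_le_of_ne (not_lt.mp hlt) hne)
  have h := luzinSeq_infinite_and_inter_finite X hα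
  have hfin := h.2 β hlt
  rw [hab, inter_self] at hfin
  exact (hab ▸ h.1) hfin

theorem finite_setOf_luzinSeq_inter_subset_Iio {α : Ordinal.{0}}
    (hα : α < (Cardinal.aleph 1).ord) (n : ℕ) :
    {β | β < α ∧ luzinSeq X α ∩ luzinSeq X β ⊆ Iio n}.Finite := by
  rcases lt_or_ge α ω with hω | hω
  · obtain ⟨m, rfl⟩ := lt_omega0.mp hω
    refine ((finite_Iio m).image Nat.cast).subset fun β hβ => ?_
    obtain ⟨k, rfl⟩ := lt_omega0.mp (hβ.1.trans hω)
    exact ⟨k, by exact_mod_cast hβ.1, rfl⟩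
  · refine Finite.of_finite_image (f := luzinSeq X) ?_
      ((injOn_luzinSeq X).mono fun β hβ => hβ.1.trans hα)
    refine ((isLuzinExtension_luzinSeq X hω hα).2.2.1 n).subset ?_
    rintro _ ⟨β, hβ, rfl⟩
    exact ⟨mem_image_of_mem _ hβ.1, hβ.2⟩

theorem luzinFamily_luzinSeq : LuzinFamily (luzinSeq X '' Iio (Cardinal.aleph 1).ord) :=
  ⟨luzinSeq X, fun _ hα => mem_image_of_mem _ hα, fun _ ⟨α, hα, h⟩ => ⟨α, hα, h⟩,
    fun _ hα _ hβ hne => (injOn_luzinSeq X).ne hα hβ hne,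
    fun _ hα => finite_setOf_luzinSeq_inter_subset_Iio X hα⟩

theorem inter_infinite_of_not_almostCovered {γ α : Ordinal.{0}} (hγα : γ ≤ α) (hω : ω ≤ α)
    (hα : α < (Cardinal.aleph 1).ord)
    (hγ : ¬AlmostCovered (luzinSeq X '' Iio (Cardinal.aleph 1).ord) (X γ)) :
    (luzinSeq X α ∩ X γ).Infinite :=
  (isLuzinExtension_luzinSeq X hω hα).2.2.2 _
    ⟨mem_image_of_mem _ hγα, fun h => hγ (h.mono (image_mono (Iio_subset_Iio hα.le)))⟩

theorem countable_setOf_inter_finite {γ : Ordinal.{0}} (hγ : γ < (Cardinal.aleph 1).ord)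
    (hX : ¬AlmostCovered (luzinSeq X '' Iio (Cardinal.aleph 1).ord) (X γ)) :
    {a | a ∈ luzinSeq X '' Iio (Cardinal.aleph 1).ord ∧ (a ∩ X γ).Finite}.Countable := by
  have hmax := max_lt hγ omega0_lt_ord_aleph_one
  refine ((countable_Iio_of_lt_ord_aleph_one hmax).image (luzinSeq X)).mono ?_
  rintro _ ⟨⟨α, hα, rfl⟩, hfin⟩
  refine ⟨α, mem_Iio.mpr (not_le.mp fun hle => ?_), rfl⟩
  exact inter_infinite_of_not_almostCovered X (le_of_max_le_left hle)
    (le_of_max_le_right hle) hα hX hfin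

end LuzinSeq

/-- under CH there is a Luzin mad family 𝒜 such that every infinite X ⊆ ℕ is
either covered by finitely many elements of 𝒜, or {a ∈ 𝒜 : a ∩ X finite} is countable. -/
theorem CH_luzin_mad_dichotomy (hCH : Cardinal.continuum = Cardinal.aleph 1) :
    ∃ 𝒜, MadFamily 𝒜 ∧ LuzinFamily 𝒜 ∧
      ∀ X : Set ℕ, X.Infinite →
        (∃ F : Finset (Set ℕ), ↑F ⊆ 𝒜 ∧ X ⊆ ⋃₀ ↑F) ∨
          {a : Set ℕ | a ∈ 𝒜 ∧ (a ∩ X).Finite}.Countable := by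
  obtain ⟨X, hX⟩ := exists_surj_of_continuum_eq_aleph_one hCH
  set 𝒜 := luzinSeq X '' Iio (Cardinal.aleph 1).ord
  refine ⟨𝒜, ⟨almostDisjoint_luzinFamily X, fun S hS => ?_⟩, luzinFamily_luzinSeq X,
    fun S _ => ?_⟩ <;> obtain ⟨γ, hγ, rfl⟩ := hX S <;> by_cases hγ𝒜 : AlmostCovered 𝒜 (X γ)
  · obtain ⟨F, hF𝒜, hSF⟩ := hγ𝒜.exists_finset (sUnion_luzinFamily X)
    obtain ⟨a, haF, ha⟩ := exists_inter_infinite_of_subset_sUnion F.finite_toSet hS hSF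
    exact ⟨a, hF𝒜 haF, inter_comm a _ ▸ ha⟩
  · have hmax := max_lt hγ omega0_lt_ord_aleph_one
    exact ⟨_, mem_image_of_mem _ hmax, inter_infinite_of_not_almostCovered X (le_max_left _ _)
      (le_max_right _ _) hmax hγ𝒜⟩
  · exact Or.inl (hγ𝒜.exists_finset (sUnion_luzinFamily X))
  · exact Or.inr (countable_setOf_inter_finite X hγ hγ𝒜)

end PsiSpace
end

section
/- Let 𝒜 be an uncountable almost disjoint family such that for every X ∈ 𝓘⁺(𝒜) the set {a ∈ 𝒜 : a ∩ X is finite} is countable. Then Ψ(𝒜) is quasi-normal. -/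
open Set

namespace PsiSpace

/-!
A regular closed set `R ⊆ Ψ(𝒜)` contains the point `a ∈ 𝒜` exactly when `a` meets the trace
`R ∩ ℕ` in an infinite set, so the points of `𝒜` lying in `R` form `𝒜↾(R ∩ ℕ)`. By the hypothesis
on `𝓘⁺(𝒜)` this family is finite or co-countable in `𝒜`, and the dichotomy passes to finite
intersections. As `𝒜` is uncountable, one of two disjoint π-closed sets contains only finitely
many points of `𝒜`, and by almost disjointness such a closed set is separated from every closed
set disjoint from it.
-/

lemma SepOpen.symm {X : Type*} [TopologicalSpace X] {A B : Set X} (h : SepOpen A B) :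
    SepOpen B A :=
  let ⟨U, V, hU, hV, hAU, hBV, hUV⟩ := h
  ⟨V, U, hV, hU, hBV, hAU, hUV.symm⟩

lemma sepOpen_of_isOpen_of_disjoint_closure {X : Type*} [TopologicalSpace X] {A B U : Set X}
    (hU : IsOpen U) (hAU : A ⊆ U) (hUB : Disjoint (closure U) B) : SepOpen A B :=
  ⟨U, (closure U)ᶜ, hU, isClosed_closure.isOpen_compl, hAU, hUB.symm.subset_compl_right,
    disjoint_compl_right_iff_subset.mpr subset_closure⟩

lemma RegClosed.isClosed {X : Type*} [TopologicalSpace X] {A : Set X} (hA : RegClosed A) :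
    IsClosed A :=
  hA ▸ isClosed_closure

lemma PiClosed.isClosed {X : Type*} [TopologicalSpace X] {A : Set X} (hA : PiClosed A) :
    IsClosed A := by
  obtain ⟨S, hS, rfl⟩ := hA
  exact isClosed_sInter fun R hR => (hS R hR).isClosed

lemma finite_or_compl_countable_biInter {α ι : Type*} {f : ι → Set α} (s : Finset ι)
    (hs : ∀ i ∈ s, (f i).Finite ∨ (f i)ᶜ.Countable) :
    (⋂ i ∈ s, f i).Finite ∨ (⋂ i ∈ s, f i)ᶜ.Countable := by
  by_cases hfin : ∃ i ∈ s, (f i).Finite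
  · obtain ⟨i, hi, hfi⟩ := hfin
    exact .inl (hfi.subset (biInter_subset_of_mem (Finset.mem_coe.mpr hi)))
  · push Not at hfin
    rw [compl_iInter₂]
    exact .inr (s.finite_toSet.countable.biUnion fun i hi => (hs i hi).resolve_left (hfin i hi))

namespace Psi

variable {𝒜 : Set (Set ℕ)}

lemma nat_injective : Function.Injective (Psi.nat : ℕ → Psi 𝒜) := Sum.inl_injective

lemma pt_injective : Function.Injective (Psi.pt : {a // a ∈ 𝒜} → Psi 𝒜) := Sum.inr_injective

lemma nat_ne_pt {n : ℕ} {a : {a // a ∈ 𝒜}} : Psi.nat n ≠ Psi.pt a := Sum.inl_ne_inr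

lemma preimage_pt_image_nat (W : Set ℕ) : Psi.pt ⁻¹' (Psi.nat '' W : Set (Psi 𝒜)) = ∅ :=
  eq_empty_of_forall_notMem fun _ ⟨_, _, h⟩ => nat_ne_pt h

lemma isOpen_iff {U : Set (Psi 𝒜)} :
    IsOpen U ↔ ∀ a, Psi.pt a ∈ U → (a.1 \ Psi.nat ⁻¹' U).Finite :=
  Iff.rfl

lemma finite_inter_of_isClosed {C : Set (Psi 𝒜)} (hC : IsClosed C) {a : {a // a ∈ 𝒜}}
    (ha : Psi.pt a ∉ C) : (a.1 ∩ Psi.nat ⁻¹' C).Finite := by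
  simpa only [preimage_compl, sdiff_compl] using isOpen_iff.mp hC.isOpen_compl a ha

lemma isOpen_singleton_nat (n : ℕ) : IsOpen ({Psi.nat n} : Set (Psi 𝒜)) :=
  isOpen_iff.mpr fun _ ha => absurd (mem_singleton_iff.mp ha).symm nat_ne_pt

lemma isOpen_insert_pt_image_nat (a : {a // a ∈ 𝒜}) {W : Set ℕ} (hW : (a.1 \ W).Finite) :
    IsOpen (insert (Psi.pt a) (Psi.nat '' W)) := by
  refine isOpen_iff.mpr fun b hb => ?_
  obtain rfl : b = a := by
    rcases hb with hb | ⟨_, _, hn⟩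
    · exact pt_injective hb
    · exact absurd hn nat_ne_pt
  refine hW.subset (sdiff_subset_sdiff_right fun n hn => ?_)
  exact .inr ⟨n, hn, rfl⟩

lemma nat_mem_closure_iff {S : Set (Psi 𝒜)} {n : ℕ} :
    Psi.nat n ∈ closure S ↔ Psi.nat n ∈ S := by
  refine ⟨fun h => ?_, fun h => subset_closure h⟩
  obtain ⟨_, rfl, hS⟩ := mem_closure_iff.mp h _ (isOpen_singleton_nat n) rfl
  exact hS

lemma preimage_nat_interior (S : Set (Psi 𝒜)) : Psi.nat ⁻¹' interior S = Psi.nat ⁻¹' S :=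
  Subset.antisymm (preimage_mono interior_subset) fun n hn =>
    interior_maximal (t := {Psi.nat n}) (singleton_subset_iff.mpr hn) (isOpen_singleton_nat n)
      (mem_singleton _)

lemma pt_mem_closure_iff {S : Set (Psi 𝒜)} {a : {a // a ∈ 𝒜}} :
    Psi.pt a ∈ closure S ↔ Psi.pt a ∈ S ∨ (a.1 ∩ Psi.nat ⁻¹' S).Infinite := by
  constructor
  · intro ha
    by_contra! ⟨haS, hfin⟩
    have hO := isOpen_insert_pt_image_nat a (W := a.1 \ Psi.nat ⁻¹' S)
      (by rwa [Set.sdiff_sdiff_right_self])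
    obtain ⟨x, hxO, hxS⟩ := mem_closure_iff.mp ha _ hO (mem_insert _ _)
    rcases hxO with rfl | ⟨n, hn, rfl⟩
    · exact haS hxS
    · exact hn.2 hxS
  · rintro (haS | hinf)
    · exact subset_closure haS
    refine mem_closure_iff.mpr fun O hO haO => ?_
    obtain ⟨n, ⟨hna, hnS⟩, hnO⟩ := (hinf.sdiff (isOpen_iff.mp hO a haO)).nonempty
    exact ⟨Psi.nat n, by_contra fun h => hnO ⟨hna, h⟩, hnS⟩

lemma pt_mem_iff_of_regClosed {R : Set (Psi 𝒜)} (hR : RegClosed R) {a : {a // a ∈ 𝒜}}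
    (ha : a.1.Infinite) : Psi.pt a ∈ R ↔ (a.1 ∩ Psi.nat ⁻¹' R).Infinite := by
  have hcl := pt_mem_closure_iff (S := interior R) (a := a)
  rw [hR, preimage_nat_interior] at hcl
  refine hcl.trans (or_iff_right_of_imp fun hint => ?_)
  have hcofin := isOpen_iff.mp isOpen_interior a hint
  rw [preimage_nat_interior] at hcofin
  simpa only [Set.sdiff_sdiff_right_self] using ha.sdiff hcofin

end Psi

open Psi

variable {𝒜 : Set (Set ℕ)}

lemma finite_or_compl_countable_of_regClosed (hinf : ∀ a ∈ 𝒜, a.Infinite)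
    (h : ∀ X ∈ IPlus 𝒜, {a : Set ℕ | a ∈ 𝒜 ∧ (a ∩ X).Finite}.Countable)
    {R : Set (Psi 𝒜)} (hR : RegClosed R) :
    (Psi.pt ⁻¹' R).Finite ∨ (Psi.pt ⁻¹' R)ᶜ.Countable := by
  set X := Psi.nat ⁻¹' R
  have hpts : Psi.pt ⁻¹' R = Subtype.val ⁻¹' ADRestrict 𝒜 X :=
    ext fun a => (pt_mem_iff_of_regClosed hR (hinf a.1 a.2)).trans ⟨fun h => ⟨a.2, h⟩, And.right⟩
  rw [hpts]
  rcases (ADRestrict 𝒜 X).finite_or_infinite with hfin | hX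
  · exact .inl (hfin.preimage Subtype.val_injective.injOn)
  · refine .inr (((h X hX).preimage Subtype.val_injective).mono fun a ha => ?_)
    exact ⟨a.2, not_infinite.mp fun hi => ha ⟨a.2, hi⟩⟩

lemma finite_or_compl_countable_of_piClosed (hinf : ∀ a ∈ 𝒜, a.Infinite)
    (h : ∀ X ∈ IPlus 𝒜, {a : Set ℕ | a ∈ 𝒜 ∧ (a ∩ X).Finite}.Countable)
    {P : Set (Psi 𝒜)} (hP : PiClosed P) :
    (Psi.pt ⁻¹' P).Finite ∨ (Psi.pt ⁻¹' P)ᶜ.Countable := by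
  obtain ⟨S, hS, rfl⟩ := hP
  rw [preimage_sInter]
  exact finite_or_compl_countable_biInter S fun R hR =>
    finite_or_compl_countable_of_regClosed hinf h (hS R hR)

/-- `P` is enlarged to an open set by the cofinite parts of its finitely many non-isolated points
lying outside `Q`; the closure of that set misses `Q` by almost disjointness. -/
lemma sepOpen_of_finite_preimage_pt (had : 𝒜.Pairwise fun a b => (a ∩ b).Finite)
    {P Q : Set (Psi 𝒜)} (hP : IsClosed P) (hQ : IsClosed Q) (hPQ : Disjoint P Q)
    (hfin : (Psi.pt ⁻¹' P).Finite) : SepOpen P Q := by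
  set W := (⋃ a ∈ Psi.pt ⁻¹' P, a.1) \ Psi.nat ⁻¹' Q
  set U := P ∪ Psi.nat '' W
  have hU_pt : Psi.pt ⁻¹' U = Psi.pt ⁻¹' P := by
    rw [preimage_union, preimage_pt_image_nat, union_empty]
  have hU_nat : Psi.nat ⁻¹' U = Psi.nat ⁻¹' P ∪ W := by
    rw [preimage_union, nat_injective.preimage_image]
  refine sepOpen_of_isOpen_of_disjoint_closure (U := U) ?_ subset_union_left ?_
  · refine isOpen_iff.mpr fun a haU => ?_
    have haP : Psi.pt a ∈ P := by rwa [← mem_preimage, ← hU_pt]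
    refine (finite_inter_of_isClosed hQ (hPQ.notMem_of_mem_left haP)).subset ?_
    rintro n ⟨hna, hnU⟩
    refine ⟨hna, by_contra fun hnQ => hnU ?_⟩
    rw [mem_preimage, ← mem_preimage, hU_nat]
    exact .inr ⟨mem_biUnion haP hna, hnQ⟩
  · refine disjoint_left.mpr fun x hxU hxQ => ?_
    rcases x with n | b
    · rcases nat_mem_closure_iff.mp hxU with hnP | ⟨m, ⟨-, hmQ⟩, hm⟩
      · exact hPQ.notMem_of_mem_left hnP hxQ
      · exact hmQ (nat_injective hm ▸ hxQ)
    have hbP : Psi.pt b ∉ P := hPQ.notMem_of_mem_right hxQ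
    rcases pt_mem_closure_iff.mp hxU with hbU | hinf
    · exact hbP (by rwa [← mem_preimage, ← hU_pt])
    refine hinf ((((finite_inter_of_isClosed hP hbP).union
      (hfin.biUnion fun a haP => had b.2 a.2 ?_))).subset ?_)
    · exact fun hba => hbP (by rwa [show b = a from Subtype.ext hba])
    rintro n ⟨hnb, hnU⟩
    rw [hU_nat] at hnU
    rcases hnU with hnP | ⟨hn, -⟩
    · exact .inl ⟨hnb, hnP⟩
    · obtain ⟨a, haP, hna⟩ := mem_iUnion₂.mp hn
      exact .inr (mem_biUnion haP ⟨hnb, hna⟩)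

/-- if 𝒜 is an uncountable almost disjoint family such that for every
X ∈ 𝓘⁺(𝒜) the set {a ∈ 𝒜 : a ∩ X finite} is countable, then Ψ(𝒜) is quasi-normal. -/
theorem dichotomy_implies_quasiNormal (𝒜 : Set (Set ℕ)) (had : AlmostDisjoint 𝒜)
    (hunc : ¬ 𝒜.Countable)
    (h : ∀ X ∈ IPlus 𝒜, {a : Set ℕ | a ∈ 𝒜 ∧ (a ∩ X).Finite}.Countable) :
    QuasiNormal (Psi 𝒜) := by
  intro P Q hP hQ hPQ
  have hpair : 𝒜.Pairwise fun a b => (a ∩ b).Finite := fun a ha b hb => had.2.2 a ha b hb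
  rcases finite_or_compl_countable_of_piClosed had.2.1 h hP with hPfin | hPco
  · exact sepOpen_of_finite_preimage_pt hpair hP.isClosed hQ.isClosed hPQ hPfin
  rcases finite_or_compl_countable_of_piClosed had.2.1 h hQ with hQfin | hQco
  · exact (sepOpen_of_finite_preimage_pt hpair hQ.isClosed hP.isClosed hPQ.symm hQfin).symm
  refine absurd ?_ hunc
  have hcover : (Psi.pt ⁻¹' P)ᶜ ∪ (Psi.pt ⁻¹' Q)ᶜ = univ := by
    rw [← compl_inter, ← preimage_inter, hPQ.inter_eq, preimage_empty, compl_empty]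
  have : Countable 𝒜 := countable_univ_iff.mp (hcover ▸ hPco.union hQco)
  exact countable_coe_iff.mp this

end PsiSpace
end

section
/- Assuming the Continuum Hypothesis, there exists a strongly ℵ₀-separated mad family. -/
open Set

namespace PsiSpace

/-!
Under CH, list the pairs `(W, f)` with `W ⊆ ℕ` and `f : ℕ → 𝒫(ℕ)` in order type `ω₁` so that each
pair recurs cofinally. Starting from the columns of `ℕ ≅ ℕ × ℕ`, add members `a_α` and sets `X_α`
by recursion on `α < ω₁`. The family built before stage `α` is countable, so a diagonal argument
gives an infinite `a_α` almost disjoint from it, deciding every earlier `X_β`, and contained in `W`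
whenever `W` is almost disjoint from all earlier members; as countable almost disjoint families
can be split arbitrarily, `X_α` can then be chosen to contain almost all of `range f` and be almost
disjoint from the other `a_β`, `β ≤ α`. Every `W` is treated at some stage, which gives
maximality. Disjoint countable `A, B` lie in an initial segment of the family, so a later stage
with `range f = A` supplies the separating set `X_γ`, and members added after that stage decide
`X_γ` by construction.
-/

open scoped Ordinal Cardinal

theorem exists_infinite_pseudointersection {T : ℕ → Set ℕ} (hT : Antitone T)
    (hinf : ∀ n, (T n).Infinite) :
    ∃ Z ⊆ T 0, Z.Infinite ∧ ∀ n, (Z \ T n).Finite := by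
  obtain ⟨t, ht_mono, htT⟩ := Filter.extraction_forall_of_frequently
    (P := fun n k => k ∈ T n) fun n => Nat.frequently_atTop_iff_infinite.2 (hinf n)
  refine ⟨range t, range_subset_iff.2 fun m => hT (Nat.zero_le m) (htT m),
    infinite_range_of_injective ht_mono.injective, fun n => ((finite_Iio n).image t).subset ?_⟩
  rintro _ ⟨⟨m, rfl⟩, hm⟩
  exact ⟨m, lt_of_not_ge fun hnm => hm (hT hnm (htT m)), rfl⟩

theorem AlmostDisjoint.exists_infinite_forall_inter_finite {𝒞 : Set (Set ℕ)}
    (h𝒞 : AlmostDisjoint 𝒞) (hc : 𝒞.Countable) :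
    ∃ Z : Set ℕ, Z.Infinite ∧ ∀ c ∈ 𝒞, (c ∩ Z).Finite := by
  obtain ⟨c, rfl⟩ := hc.exists_eq_range h𝒞.1.nonempty
  have hinf : ∀ n, (⋃ k < n, c k)ᶜ.Infinite := by
    intro n
    obtain ⟨d, ⟨m, rfl⟩, hd⟩ := (h𝒞.1.sdiff ((finite_Iio n).image c)).nonempty
    have hfin : (⋃ k < n, c m ∩ c k).Finite :=
      (finite_Iio n).biUnion fun k hk =>
        h𝒞.2.2 _ ⟨m, rfl⟩ _ ⟨k, rfl⟩ fun hmk => hd ⟨k, hk, hmk.symm⟩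
    refine ((h𝒞.2.1 _ ⟨m, rfl⟩).sdiff hfin).mono fun x hx hxU => hx.2 ?_
    obtain ⟨k, hk, hxk⟩ := mem_iUnion₂.1 hxU
    exact mem_iUnion₂.2 ⟨k, hk, hx.1, hxk⟩
  have hanti : Antitone fun n => (⋃ k < n, c k)ᶜ := fun m n hmn =>
    compl_subset_compl.2 (biUnion_mono (fun k hk => lt_of_lt_of_le hk hmn) fun _ _ => subset_rfl)
  obtain ⟨Z, -, hZ, hZT⟩ := exists_infinite_pseudointersection hanti hinf
  refine ⟨Z, hZ, ?_⟩
  rintro _ ⟨n, rfl⟩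
  exact (hZT (n + 1)).subset fun x hx =>
    ⟨hx.2, fun hxT => hxT (mem_iUnion₂.2 ⟨n, n.lt_succ_self, hx.1⟩)⟩

theorem exists_infinite_subset_forall_decided {Y : Set ℕ} (hY : Y.Infinite)
    {𝒳 : Set (Set ℕ)} (h𝒳 : 𝒳.Countable) :
    ∃ b ⊆ Y, b.Infinite ∧ ∀ X ∈ 𝒳, (b \ X).Finite ∨ (b ∩ X).Finite := by
  classical
  obtain ⟨X, h𝒳X⟩ := countable_iff_exists_subset_range.1 h𝒳
  let T : ℕ → Set ℕ := fun n =>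
    Nat.rec Y (fun n Tn => if (Tn ∩ X n).Infinite then Tn ∩ X n else Tn \ X n) n
  have hT_succ (n : ℕ) :
      T (n + 1) = if (T n ∩ X n).Infinite then T n ∩ X n else T n \ X n := rfl
  have hT_inf (n : ℕ) : (T n).Infinite := by
    induction n with
    | zero => exact hY
    | succ n ih =>
      rw [hT_succ]
      split_ifs with h
      · exact h
      · simpa using ih.sdiff (not_infinite.1 h)
  have hT_anti : Antitone T := antitone_nat_of_succ_le fun n => by
    rw [hT_succ]
    split_ifs
    exacts [inter_subset_left, sdiff_subset]
  obtain ⟨b, hbY, hb, hbT⟩ := exists_infinite_pseudointersection hT_anti hT_inf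
  refine ⟨b, hbY, hb, ?_⟩
  rintro _ hX
  obtain ⟨n, rfl⟩ := h𝒳X hX
  by_cases h : (T n ∩ X n).Infinite
  · refine Or.inl ((hbT (n + 1)).subset (sdiff_subset_sdiff_right ?_))
    rw [hT_succ, if_pos h]
    exact inter_subset_right
  · refine Or.inr ((hbT (n + 1)).subset fun x ⟨hxb, hxX⟩ => ⟨hxb, fun hxT => ?_⟩)
    rw [hT_succ, if_neg h] at hxT
    exact hxT.2 hxX

theorem finite_setOf_mem_and_le {α : Type*} {s : Set α} {e : α → ℕ} (he : InjOn e s) (n : ℕ) :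
    {x ∈ s | e x ≤ n}.Finite :=
  Finite.of_finite_image ((finite_Iic n).subset (image_subset_iff.2 fun _ hx => hx.2))
    (he.mono fun _ hx => hx.1)

theorem exists_separating_set {A B : Set (Set ℕ)} (hA : A.Countable) (hB : B.Countable)
    (hAB : ∀ a ∈ A, ∀ b ∈ B, (a ∩ b).Finite) :
    ∃ X : Set ℕ, (∀ a ∈ A, (a \ X).Finite) ∧ ∀ b ∈ B, (b ∩ X).Finite := by
  obtain ⟨eA, heA⟩ := countable_iff_exists_injOn.1 hA
  obtain ⟨eB, heB⟩ := countable_iff_exists_injOn.1 hB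
  refine ⟨⋃ a ∈ A, a \ ⋃ b ∈ {b ∈ B | eB b ≤ eA a}, b, fun a ha => ?_, fun b hb => ?_⟩
  · refine ((finite_setOf_mem_and_le heB (eA a)).biUnion fun b hb => hAB a ha b hb.1).subset ?_
    intro x ⟨hxa, hxX⟩
    by_contra hx
    refine hxX (mem_biUnion ha ⟨hxa, fun hxU => hx ?_⟩)
    obtain ⟨b, hb, hxb⟩ := mem_iUnion₂.1 hxU
    exact mem_iUnion₂.2 ⟨b, hb, hxa, hxb⟩
  · refine ((finite_setOf_mem_and_le heA (eB b)).biUnion fun a ha =>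
      (hAB a ha.1 b hb).subset (inter_comm b a).subset).subset ?_
    intro x ⟨hxb, hxX⟩
    obtain ⟨a, ha, hxa, hxU⟩ := mem_iUnion₂.1 hxX
    have hba : eA a < eB b := lt_of_not_ge fun hle => hxU (mem_biUnion ⟨hb, hle⟩ hxb)
    exact mem_iUnion₂.2 ⟨a, ⟨ha, hba.le⟩, hxb, hxa⟩

def column (n : ℕ) : Set ℕ := range (Nat.pair n)

theorem column_infinite (n : ℕ) : (column n).Infinite :=
  infinite_range_of_injective fun _ _ h => (Nat.pair_eq_pair.1 h).2

theorem pairwise_disjoint_column : Pairwise (Function.onFun Disjoint column) := by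
  intro m n hmn
  refine disjoint_left.2 ?_
  rintro _ ⟨a, rfl⟩ ⟨b, hb⟩
  exact hmn (Nat.pair_eq_pair.1 hb).1.symm

theorem column_injective : Function.Injective column := fun m n h => by
  by_contra hmn
  exact (pairwise_disjoint_column hmn).ne_of_mem ⟨0, rfl⟩ (h ▸ ⟨0, rfl⟩) rfl

theorem AlmostDisjoint.insert {𝒞 : Set (Set ℕ)} (h𝒞 : AlmostDisjoint 𝒞) {b : Set ℕ}
    (hb : b.Infinite) (hb𝒞 : ∀ c ∈ 𝒞, (c ∩ b).Finite) : AlmostDisjoint (insert b 𝒞) := by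
  refine ⟨h𝒞.1.mono (subset_insert b 𝒞), forall_mem_insert.2 ⟨hb, h𝒞.2.1⟩, ?_⟩
  rintro c (rfl | hc) d (rfl | hd) hcd
  · exact absurd rfl hcd
  · exact inter_comm c d ▸ hb𝒞 d hd
  · exact hb𝒞 c hc
  · exact h𝒞.2.2 c hc d hd hcd

theorem AlmostDisjoint.exists_separator {𝒞 : Set (Set ℕ)} (h𝒞 : AlmostDisjoint 𝒞)
    (hc : 𝒞.Countable) (S : Set (Set ℕ)) :
    ∃ Y : Set ℕ, ∀ c ∈ 𝒞, (c ∈ S → (c \ Y).Finite) ∧ (c ∉ S → (c ∩ Y).Finite) := by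
  obtain ⟨Y, hYS, hYS'⟩ := exists_separating_set (hc.mono inter_subset_left)
    (hc.mono sdiff_subset) fun a ha b hb =>
      h𝒞.2.2 a ha.1 b hb.1 fun hab => hb.2 (hab ▸ ha.2)
  exact ⟨Y, fun c hc => ⟨fun hcS => hYS c ⟨hc, hcS⟩, fun hcS => hYS' c ⟨hc, hcS⟩⟩⟩

/-- The requirements on the member `b` and the separator `Y` added at one stage, given the
family `𝒞` and the separators `𝒳` built so far and the targets `W` and `S` of the stage. -/
structure IsAdmissibleStep (𝒞 𝒳 : Set (Set ℕ)) (W : Set ℕ) (S : Set (Set ℕ)) (b Y : Set ℕ) :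
    Prop where
  infinite : b.Infinite
  inter_finite : ∀ c ∈ 𝒞, (c ∩ b).Finite
  decided : ∀ X ∈ 𝒳, (b \ X).Finite ∨ (b ∩ X).Finite
  meets : W.Infinite → ∃ c ∈ insert b 𝒞, (c ∩ W).Infinite
  separates : ∀ c ∈ insert b 𝒞, (c ∈ S → (c \ Y).Finite) ∧ (c ∉ S → (c ∩ Y).Finite)

theorem exists_isAdmissibleStep {𝒞 𝒳 : Set (Set ℕ)} (h𝒞 : AlmostDisjoint 𝒞)
    (hc : 𝒞.Countable) (h𝒳 : 𝒳.Countable) (W : Set ℕ) (S : Set (Set ℕ)) :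
    ∃ p : Set ℕ × Set ℕ, IsAdmissibleStep 𝒞 𝒳 W S p.1 p.2 := by
  obtain ⟨Z, hZ, hZ𝒞, hZW⟩ : ∃ Z : Set ℕ, Z.Infinite ∧ (∀ c ∈ 𝒞, (c ∩ Z).Finite) ∧
      ((W.Infinite ∧ ∀ c ∈ 𝒞, (c ∩ W).Finite) → Z ⊆ W) := by
    by_cases hW : W.Infinite ∧ ∀ c ∈ 𝒞, (c ∩ W).Finite
    · exact ⟨W, hW.1, hW.2, fun _ => subset_rfl⟩
    · obtain ⟨Z, hZ, hZ𝒞⟩ := h𝒞.exists_infinite_forall_inter_finite hc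
      exact ⟨Z, hZ, hZ𝒞, fun h => absurd h hW⟩
  obtain ⟨b, hbZ, hb, hb𝒳⟩ := exists_infinite_subset_forall_decided hZ h𝒳
  have hb𝒞 (c) (hc : c ∈ 𝒞) : (c ∩ b).Finite := (hZ𝒞 c hc).subset (inter_subset_inter_right c hbZ)
  obtain ⟨Y, hY⟩ := (h𝒞.insert hb hb𝒞).exists_separator (hc.insert b) S
  refine ⟨(b, Y), hb, hb𝒞, hb𝒳, fun hWinf => ?_, hY⟩
  by_cases hW : ∀ c ∈ 𝒞, (c ∩ W).Finite
  · refine ⟨b, mem_insert b 𝒞, ?_⟩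
    rwa [inter_eq_left.2 (hbZ.trans (hZW ⟨hWinf, hW⟩))]
  · push Not at hW
    obtain ⟨c, hc, hcW⟩ := hW
    exact ⟨c, mem_insert_of_mem b hc, hcW⟩

theorem countable_Iio_of_lt_omega_one {α : Ordinal.{0}} (hα : α < ω₁) : (Iio α).Countable := by
  rw [← Cardinal.le_aleph0_iff_set_countable, Cardinal.mk_Iio_ordinal, Cardinal.lift_le_aleph0,
    ← Cardinal.lt_aleph_one_iff, ← Cardinal.lt_ord, Cardinal.ord_aleph]
  exact hα

section Construction

variable (g : Ordinal.{0} → Set ℕ × (ℕ → Set ℕ))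

/-- The pairs `(a_α, X_α)`, where `g α = (W, f)` gives the targets `W` and `range f` of stage `α`.
`Classical.epsilon` gives junk at a stage with no admissible pair; `admissibleAt_of_lt_omega_one`
rules this out below `ω₁`. -/
noncomputable def construction : Ordinal.{0} → Set ℕ × Set ℕ :=
  Ordinal.lt_wf.fix fun α prev => Classical.epsilon fun p : Set ℕ × Set ℕ =>
    IsAdmissibleStep (range column ∪ {c | ∃ β h, (prev β h).1 = c}) {X | ∃ β h, (prev β h).2 = X}
      (g α).1 (range (g α).2) p.1 p.2

/-- The columns seed the family so that it is infinite from the start. -/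
def family (α : Ordinal.{0}) : Set (Set ℕ) :=
  range column ∪ (fun β => (construction g β).1) '' Iio α

def separators (α : Ordinal.{0}) : Set (Set ℕ) :=
  (fun β => (construction g β).2) '' Iio α

def AdmissibleAt (α : Ordinal.{0}) : Prop :=
  IsAdmissibleStep (family g α) (separators g α) (g α).1 (range (g α).2)
    (construction g α).1 (construction g α).2

theorem construction_eq (α : Ordinal.{0}) :
    construction g α = Classical.epsilon fun p : Set ℕ × Set ℕ =>
      IsAdmissibleStep (family g α) (separators g α) (g α).1 (range (g α).2) p.1 p.2 := by
  rw [construction, Ordinal.lt_wf.fix_eq]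
  simp only [family, separators, image, mem_Iio, exists_prop]
  rfl

theorem family_mono {α β : Ordinal.{0}} (h : α ≤ β) : family g α ⊆ family g β :=
  union_subset_union_right _ (image_mono (Iio_subset_Iio h))

theorem construction_mem_family {α β : Ordinal.{0}} (h : β < α) :
    (construction g β).1 ∈ family g α :=
  Or.inr ⟨β, h, rfl⟩

theorem almostDisjoint_family {α : Ordinal.{0}} (h : ∀ β < α, AdmissibleAt g β) :
    AlmostDisjoint (family g α) := by
  have hcol : (range column).Infinite := infinite_range_of_injective column_injective
  refine ⟨hcol.mono subset_union_left, ?_, ?_⟩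
  · rintro _ (⟨n, rfl⟩ | ⟨β, hβ, rfl⟩)
    exacts [column_infinite n, (h β hβ).infinite]
  · rintro _ (⟨m, rfl⟩ | ⟨β, hβ, rfl⟩) _ (⟨n, rfl⟩ | ⟨γ, hγ, rfl⟩) hne
    · rw [(pairwise_disjoint_column fun hmn => hne (congrArg column hmn)).inter_eq]
      exact finite_empty
    · exact (h γ hγ).inter_finite _ (Or.inl ⟨m, rfl⟩)
    · exact inter_comm _ _ ▸ (h β hβ).inter_finite _ (Or.inl ⟨n, rfl⟩)
    · rcases lt_trichotomy β γ with hβγ | rfl | hγβ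
      · exact (h γ hγ).inter_finite _ (construction_mem_family g hβγ)
      · exact absurd rfl hne
      · exact inter_comm _ _ ▸ (h β hβ).inter_finite _ (construction_mem_family g hγβ)

theorem admissibleAt_of_lt_omega_one {α : Ordinal.{0}} (hα : α < ω₁) : AdmissibleAt g α := by
  induction α using WellFoundedLT.induction with
  | _ α ih =>
    have hIio := countable_Iio_of_lt_omega_one hα
    unfold AdmissibleAt
    rw [construction_eq]
    exact Classical.epsilon_spec (exists_isAdmissibleStep
      (almostDisjoint_family g fun β hβ => ih β hβ (hβ.trans hα))
      ((countable_range column).union (hIio.image _)) (hIio.image _) _ _)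

theorem insert_family_subset {α β : Ordinal.{0}} (h : β < α) :
    insert (construction g β).1 (family g β) ⊆ family g α :=
  insert_subset (construction_mem_family g h) (family_mono g h.le)

theorem exists_lt_omega_one_mem_family {c : Set ℕ} (hc : c ∈ family g ω₁) :
    ∃ β < ω₁, c ∈ family g β := by
  rcases hc with hc | ⟨β, hβ, rfl⟩
  · exact ⟨0, Ordinal.omega_pos 1, Or.inl hc⟩
  · have hω₁ : Order.IsSuccLimit ω₁ := by
      rw [← Cardinal.ord_aleph]
      exact Cardinal.isSuccLimit_ord (Cardinal.aleph0_le_aleph 1)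
    exact ⟨Order.succ β, hω₁.succ_lt hβ, construction_mem_family g (Order.lt_succ β)⟩

theorem exists_lt_omega_one_subset_family {s : Set (Set ℕ)} (hs : s.Countable)
    (hsub : s ⊆ family g ω₁) : ∃ δ < ω₁, s ⊆ family g δ := by
  choose rank hrank hmem using fun c : s => exists_lt_omega_one_mem_family g (hsub c.2)
  have : Countable s := hs.to_subtype
  exact ⟨⨆ c, rank c, Ordinal.iSup_lt_omega_one hrank, fun c hc =>
    family_mono g (Ordinal.le_iSup rank ⟨c, hc⟩) (hmem ⟨c, hc⟩)⟩

theorem madFamily_family (hg : ∀ W : Set ℕ, ∃ γ < ω₁, (g γ).1 = W) :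
    MadFamily (family g ω₁) := by
  refine ⟨almostDisjoint_family g fun β hβ => admissibleAt_of_lt_omega_one g hβ, fun W hW => ?_⟩
  obtain ⟨γ, hγ, rfl⟩ := hg W
  obtain ⟨c, hc, hcW⟩ := (admissibleAt_of_lt_omega_one g hγ).meets hW
  exact ⟨c, insert_family_subset g hγ hc, hcW⟩

theorem stronglyAleph0Separated_family
    (hg : ∀ f : ℕ → Set ℕ, ∀ δ < ω₁, ∃ γ, δ ≤ γ ∧ γ < ω₁ ∧ (g γ).2 = f) :
    StronglyAleph0Separated (family g ω₁) := by
  intro A B hA hB hAc hAinf hBc _ hAB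
  obtain ⟨f, rfl⟩ := hAc.exists_eq_range hAinf.nonempty
  obtain ⟨δ, hδ, hABδ⟩ :=
    exists_lt_omega_one_subset_family g (hAc.union hBc) (union_subset hA hB)
  obtain ⟨γ, hδγ, hγ, hf⟩ := hg f δ hδ
  have hsep := (admissibleAt_of_lt_omega_one g hγ).separates
  rw [hf] at hsep
  have hABγ : range f ∪ B ⊆ insert (construction g γ).1 (family g γ) :=
    hABδ.trans ((family_mono g hδγ).trans (subset_insert _ _))
  refine ⟨(construction g γ).2, ?_, fun a ha => (hsep a (hABγ (Or.inl ha))).1 ha,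
    fun b hb => (hsep b (hABγ (Or.inr hb))).2 (disjoint_right.1 hAB hb)⟩
  intro c hc
  by_cases hcγ : c ∈ insert (construction g γ).1 (family g γ)
  · exact (em (c ∈ range f)).imp (hsep c hcγ).1 (hsep c hcγ).2
  · obtain _ | ⟨β, hβ, rfl⟩ := hc
    · exact absurd (Or.inr (Or.inl ‹_›)) hcγ
    · have hγβ : γ < β := lt_of_not_ge fun hβγ =>
        hcγ (hβγ.eq_or_lt.elim (fun h => h ▸ mem_insert _ _)
          fun h => Or.inr (construction_mem_family g h))
      exact (admissibleAt_of_lt_omega_one g hβ).decided _ ⟨γ, hγβ, rfl⟩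

end Construction

theorem exists_cofinal_enumeration {T : Type} [Nonempty T] (hT : #T ≤ ℵ₁) :
    ∃ g : Ordinal.{0} → T, ∀ t, ∀ δ < ω₁, ∃ γ, δ ≤ γ ∧ γ < ω₁ ∧ g γ = t := by
  have hIio : #(Iio (ω₁ : Ordinal.{0})) = Cardinal.lift.{1, 0} ℵ₁ := by
    rw [Cardinal.mk_Iio_ordinal, Ordinal.card_omega]
  obtain ⟨i⟩ : Nonempty (Iio ω₁ × T ↪ Iio (ω₁ : Ordinal.{0})) := by
    rw [← Cardinal.le_def, Cardinal.mk_prod, hIio, Cardinal.lift_uzero]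
    calc Cardinal.lift.{1, 0} ℵ₁ * Cardinal.lift.{1, 0} #T
        ≤ Cardinal.lift.{1, 0} ℵ₁ * Cardinal.lift.{1, 0} ℵ₁ :=
          mul_le_mul_right (Cardinal.lift_le.2 hT) _
      _ = Cardinal.lift.{1, 0} ℵ₁ := by
        rw [Cardinal.mul_eq_self (by simp [Cardinal.aleph0_le_aleph 1])]
  have : Nonempty (Iio (ω₁ : Ordinal.{0})) := ⟨⟨0, Ordinal.omega_pos 1⟩⟩
  refine ⟨fun γ => if hγ : γ < ω₁ then (Function.invFun i ⟨γ, hγ⟩).2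
    else Classical.arbitrary T, fun t δ hδ => ?_⟩
  by_contra! hcof
  have hlt (β : Iio (ω₁ : Ordinal.{0})) : (i (β, t) : Ordinal.{0}) < δ := by
    by_contra! hle
    refine hcof _ hle (i (β, t)).2 ?_
    show dite _ _ _ = t
    rw [dif_pos (show (i (β, t) : Ordinal.{0}) < ω₁ from (i (β, t)).2), Subtype.coe_eta,
      Function.leftInverse_invFun i.injective]
  have hinj : Function.Injective fun β : Iio (ω₁ : Ordinal.{0}) => (⟨i (β, t), hlt β⟩ : Iio δ) := by
    intro β β' h
    have h' := Subtype.mk.inj h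
    exact (Prod.mk.inj (i.injective (Subtype.ext h'))).1
  have := Cardinal.mk_le_of_injective hinj
  rw [hIio, Cardinal.mk_Iio_ordinal, Cardinal.lift_le] at this
  exact (Cardinal.lt_ord.1 (Cardinal.ord_aleph 1 ▸ hδ)).not_ge this

theorem mk_set_nat_prod_arrow_eq_continuum : #(Set ℕ × (ℕ → Set ℕ)) = 𝔠 := by
  rw [Cardinal.mk_prod, Cardinal.mk_arrow, Cardinal.mk_set_nat]
  simp [Cardinal.continuum_power_aleph0, Cardinal.continuum_mul_self]

/-- under CH there is a strongly ℵ₀-separated mad family. -/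
theorem CH_stronglySeparated_mad (hCH : Cardinal.continuum = Cardinal.aleph 1) :
    ∃ 𝒜, MadFamily 𝒜 ∧ StronglyAleph0Separated 𝒜 := by
  have hCH₀ : (𝔠 : Cardinal.{0}) = ℵ₁ := Cardinal.lift_injective (by simpa using hCH)
  obtain ⟨g, hg⟩ := exists_cofinal_enumeration (T := Set ℕ × (ℕ → Set ℕ))
    (mk_set_nat_prod_arrow_eq_continuum.trans hCH₀).le
  refine ⟨family g ω₁, madFamily_family g fun W => ?_,
    stronglyAleph0Separated_family g fun f δ hδ => ?_⟩
  · obtain ⟨γ, -, hγ, hW⟩ := hg (W, fun _ => ∅) 0 (Ordinal.omega_pos 1)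
    exact ⟨γ, hγ, by rw [hW]⟩
  · obtain ⟨γ, hδγ, hγ, hf⟩ := hg (∅, f) δ hδ
    exact ⟨γ, hδγ, hγ, by rw [hf]⟩

end PsiSpace
end
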